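/- arXiv:2102.06436 — 7 statements merged into one kernel-verified Lean document; each statement's English description precedes it below -/
import Mathlib

section
/- Let n ≥ 1, let π_I : ℝⁿ → ℝ be the projection onto a distinguished coordinate, let f₀, g : ℝⁿ → ℝⁿ satisfy π_I(f₀(x)) = π_I(x) for all x ∈ ℝⁿ, let ε > 0 and set f_ε := f₀ + ε·g. Assume f_ε is a bijection, and that there is L_g > 0 with |π_I(g(x₁)) − π_I(g(x₂))| ≤ L_g‖x₁ − x₂‖ for all x₁, x₂ ∈ ℝⁿ. Let C > 0, λ ∈ (0,1), m ≥ 1, and let z, x, w ∈ ℝⁿ satisfy: ‖f_ε^{−j}(z) − f_ε^{−j}(x)‖ < C·λ^{j} for all integers j ≥ 0, and ‖f_ε^{m+j}(w) − f_ε^{m+j}(x)‖ < C·λ^{j} for all integers j ≥ 0. Then π_I(f_ε^{m}(w) − z) ≥ ε·( Σ_{j=0}^{m−1} π_I(g(f_ε^{j}(x))) − ((1+λ)/(1−λ))·C·L_g ). -/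
/-!
Along an orbit the action coordinate changes by exactly `ε • g` in the `I` direction, so
`I(f^m w) - I(z)` splits into the Birkhoff sum of `ε g_I` along the orbit of `x` plus two
discrepancies: `I(f^m w) - I(f^m x)` and `I(x) - I(z)`. Each discrepancy telescopes along
the forward (resp. backward) orbits, which converge exponentially, so it is bounded by the
geometric series of the Lipschitz increments: `ε L_g C / (1 - λ)` forwards and
`ε L_g C λ / (1 - λ)` backwards.
-/

open Finset Filter Topology

theorem abs_le_of_tendsto_zero_of_abs_sub_le_geometric {d : ℕ → ℝ} {K r : ℝ}
    (hd : Tendsto d atTop (𝓝 0)) (hr₀ : 0 ≤ r) (hr₁ : r < 1)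
    (hstep : ∀ k, |d (k + 1) - d k| ≤ K * r ^ k) :
    |d 0| ≤ K / (1 - r) := by
  have hK : 0 ≤ K := by simpa using (abs_nonneg _).trans (hstep 0)
  have hbound : ∀ N, |d 0| ≤ |d N| + K / (1 - r) := fun N => by
    have hsum : |∑ k ∈ range N, (d (k + 1) - d k)| ≤ K / (1 - r) :=
      calc |∑ k ∈ range N, (d (k + 1) - d k)|
          ≤ ∑ k ∈ range N, K * r ^ k :=
            (abs_sum_le_sum_abs _ _).trans (sum_le_sum fun k _ => hstep k)
        _ = K * ∑ k ∈ Ico 0 N, r ^ k := by rw [mul_sum, range_eq_Ico]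
        _ ≤ K * (r ^ 0 / (1 - r)) :=
            mul_le_mul_of_nonneg_left (geom_sum_Ico_le_of_lt_one hr₀ hr₁) hK
        _ = K / (1 - r) := by ring
    rw [sum_range_sub, abs_sub_comm] at hsum
    linarith [abs_sub_abs_le_abs_sub (d 0) (d N)]
  have hlim : Tendsto (fun N => |d N| + K / (1 - r)) atTop (𝓝 (0 + K / (1 - r))) := by
    simpa using hd.abs.add_const (K / (1 - r))
  simpa using ge_of_tendsto' hlim hbound

section Cocycle

variable {α : Type*} {T : α → α} {I ψ : α → ℝ}

theorem apply_iterate_eq_add_birkhoffSum (hI : ∀ y, I (T y) = I y + ψ y) (n : ℕ) (y : α) :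
    I (T^[n] y) = I y + birkhoffSum T ψ n y := by
  induction n with
  | zero => simp
  | succ n ih => rw [Function.iterate_succ_apply', hI, ih, birkhoffSum_succ, add_assoc]

theorem abs_sub_le_of_tendsto_iterate (hI : ∀ y, I (T y) = I y + ψ y) {a b : α} {K r : ℝ}
    (hr₀ : 0 ≤ r) (hr₁ : r < 1)
    (hconv : Tendsto (fun k => I (T^[k] a) - I (T^[k] b)) atTop (𝓝 0))
    (hψ : ∀ k, |ψ (T^[k] a) - ψ (T^[k] b)| ≤ K * r ^ k) :
    |I a - I b| ≤ K / (1 - r) := by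
  refine abs_le_of_tendsto_zero_of_abs_sub_le_geometric hconv hr₀ hr₁ fun k => ?_
  simp only [Function.iterate_succ_apply', hI]
  convert hψ k using 2
  ring

end Cocycle

theorem tendsto_apply_sub_of_norm_sub_lt_geometric {ι : Type*} [Fintype ι]
    {u v : ℕ → EuclideanSpace ℝ ι} {C r : ℝ} (hr₀ : 0 ≤ r) (hr₁ : r < 1)
    (huv : ∀ k, ‖u k - v k‖ < C * r ^ k) (i : ι) :
    Tendsto (fun k => u k i - v k i) atTop (𝓝 0) := by
  have hgeom : Tendsto (fun k => C * r ^ k) atTop (𝓝 0) := by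
    simpa using (tendsto_pow_atTop_nhds_zero_of_lt_one hr₀ hr₁).const_mul C
  refine squeeze_zero_norm (fun k => ?_) hgeom
  exact (PiLp.norm_apply_le (u k - v k) i).trans (huv k).le

theorem stmt_0_general (n : ℕ) (iI : Fin n)
    (f₀ g : EuclideanSpace ℝ (Fin n) → EuclideanSpace ℝ (Fin n))
    (hf₀ : ∀ x, f₀ x iI = x iI)
    (ε : ℝ) (hε : 0 < ε)
    (fε : EuclideanSpace ℝ (Fin n) → EuclideanSpace ℝ (Fin n))
    (hfε : ∀ x, fε x = f₀ x + ε • g x)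
    (hbij : Function.Bijective fε)
    (Lg : ℝ) (hLg : 0 < Lg)
    (hLip : ∀ x₁ x₂, |g x₁ iI - g x₂ iI| ≤ Lg * ‖x₁ - x₂‖)
    (C lam : ℝ) (hlam : 0 < lam) (hlam1 : lam < 1)
    (m : ℕ)
    (z x w : EuclideanSpace ℝ (Fin n))
    (hz : ∀ j : ℕ, ‖(Function.invFun fε)^[j] z - (Function.invFun fε)^[j] x‖ < C * lam ^ j)
    (hw : ∀ j : ℕ, ‖fε^[m + j] w - fε^[m + j] x‖ < C * lam ^ j) :
    ε * ((∑ j ∈ Finset.range m, g (fε^[j] x) iI) - (1 + lam) / (1 - lam) * C * Lg)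
      ≤ (fε^[m] w - z) iI := by
  set F := Function.invFun fε
  have hFε : ∀ y, fε (F y) = y := Function.rightInverse_invFun hbij.2
  have hfwd : ∀ y, fε y iI = y iI + ε * g y iI := fun y => by simp [hfε, hf₀]
  have hbwd : ∀ y, F y iI = y iI + -(ε * g (F y) iI) := fun y => by
    linarith [hFε y ▸ hfwd (F y)]
  have hincr : ∀ a b k, ‖a - b‖ < C * lam ^ k →
      |ε * g a iI - ε * g b iI| ≤ ε * Lg * C * lam ^ k := fun a b k hab => by
    rw [← mul_sub, abs_mul, abs_of_pos hε, mul_assoc, mul_assoc]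
    exact mul_le_mul_of_nonneg_left ((hLip a b).trans (by gcongr)) hε.le
  set I : EuclideanSpace ℝ (Fin n) → ℝ := fun y => y iI
  have hiter : ∀ k y, fε^[k] (fε^[m] y) = fε^[m + k] y := fun k y => by
    rw [← Function.iterate_add_apply, add_comm]
  have hunstable : |fε^[m] w iI - fε^[m] x iI| ≤ ε * Lg * C / (1 - lam) := by
    refine abs_sub_le_of_tendsto_iterate (I := I) hfwd hlam.le hlam1 ?_ fun k => ?_
    · simpa only [hiter] using
        tendsto_apply_sub_of_norm_sub_lt_geometric hlam.le hlam1 hw iI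
    · simpa only [hiter] using hincr _ _ k (hw k)
  have hstable : |x iI - z iI| ≤ ε * Lg * C * lam / (1 - lam) := by
    rw [abs_sub_comm]
    refine abs_sub_le_of_tendsto_iterate (I := I) hbwd hlam.le hlam1
      (tendsto_apply_sub_of_norm_sub_lt_geometric hlam.le hlam1 hz iI) fun k => ?_
    rw [neg_sub_neg, abs_sub_comm, mul_assoc _ lam, ← pow_succ']
    simpa only [← Function.iterate_succ_apply' F] using hincr _ _ _ (hz (k + 1))
  have horbit : fε^[m] x iI = x iI + ε * ∑ j ∈ range m, g (fε^[j] x) iI := by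
    rw [mul_sum]
    exact apply_iterate_eq_add_birkhoffSum (I := I) hfwd m x
  have hsplit : ε * ((1 + lam) / (1 - lam) * C * Lg)
      = ε * Lg * C / (1 - lam) + ε * Lg * C * lam / (1 - lam) := by ring
  rw [PiLp.sub_apply, mul_sub, hsplit]
  linarith [abs_le.mp hunstable, abs_le.mp hstable]

/-- Key quantitative step: lower bound for the gain in the action coordinate `I`
along a finite fragment of a homoclinic excursion. -/
theorem stmt_0 (n : ℕ) (hn : 1 ≤ n) (iI : Fin n)
    (f₀ g : EuclideanSpace ℝ (Fin n) → EuclideanSpace ℝ (Fin n))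
    (hf₀ : ∀ x, f₀ x iI = x iI)
    (ε : ℝ) (hε : 0 < ε)
    (fε : EuclideanSpace ℝ (Fin n) → EuclideanSpace ℝ (Fin n))
    (hfε : ∀ x, fε x = f₀ x + ε • g x)
    (hbij : Function.Bijective fε)
    (Lg : ℝ) (hLg : 0 < Lg)
    (hLip : ∀ x₁ x₂, |g x₁ iI - g x₂ iI| ≤ Lg * ‖x₁ - x₂‖)
    (C lam : ℝ) (hC : 0 < C) (hlam : 0 < lam) (hlam1 : lam < 1)
    (m : ℕ) (hm : 1 ≤ m)
    (z x w : EuclideanSpace ℝ (Fin n))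
    (hz : ∀ j : ℕ, ‖(Function.invFun fε)^[j] z - (Function.invFun fε)^[j] x‖ < C * lam ^ j)
    (hw : ∀ j : ℕ, ‖fε^[m + j] w - fε^[m + j] x‖ < C * lam ^ j) :
    ε * ((∑ j ∈ Finset.range m, g (fε^[j] x) iI) - (1 + lam) / (1 - lam) * C * Lg)
      ≤ (fε^[m] w - z) iI :=
  stmt_0_general n iI f₀ g hf₀ ε hε fε hfε hbij Lg hLg hLip C lam hlam hlam1 m z x w hz hw
end

section
/- Let n ≥ 1, let π_I : ℝⁿ → ℝ be the projection onto a distinguished coordinate, let f₀, g : ℝⁿ → ℝⁿ satisfy π_I(f₀(x)) = π_I(x) for all x ∈ ℝⁿ, let ε ≥ 0 and set f_ε := f₀ + ε·g. Assume there is L_g > 0 with |π_I(g(x₁)) − π_I(g(x₂))| ≤ L_g‖x₁ − x₂‖ for all x₁, x₂ ∈ ℝⁿ. Let C > 0, λ ∈ (0,1), m ≥ 0, and let w, x ∈ ℝⁿ satisfy ‖f_ε^{m+j}(w) − f_ε^{m+j}(x)‖ < C·λ^{j} for all integers j ≥ 0. Then |π_I(f_ε^{m}(w) − f_ε^{m}(x))|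 ≤ ε·L_g·C/(1−λ). -/
/-!
Write `D j` for the `I`-coordinate of `f_ε^{m+j}(w) - f_ε^{m+j}(x)`. Since `f₀` preserves `I`,
only the perturbation `ε g` moves it, so `|D (j+1) - D j| ≤ ε L_g ‖f_ε^{m+j}(w) - f_ε^{m+j}(x)‖
≤ ε L_g C λ^j`. The shadowing hypothesis also forces `D j → 0`, so summing the geometric series
of increments from `j = 0` to `∞` bounds `|D 0|`.
-/

open Filter Topology

lemma dist_apply_sub_map_sub_le {ι : Type*} [Fintype ι] {i : ι}
    {f g : EuclideanSpace ℝ ι → EuclideanSpace ℝ ι} {ε L : ℝ} (hε : 0 ≤ ε)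
    (hf : ∀ y, f y i = y i + ε * g y i) (hg : ∀ y z, |g y i - g z i| ≤ L * ‖y - z‖)
    (y z : EuclideanSpace ℝ ι) :
    dist ((y - z) i) ((f y - f z) i) ≤ ε * L * ‖y - z‖ := by
  have hincr : (f y - f z) i - (y - z) i = ε * (g y i - g z i) := by
    simp only [PiLp.sub_apply, hf]
    ring
  rw [dist_comm, Real.dist_eq, hincr, abs_mul, abs_of_nonneg hε, mul_assoc]
  exact mul_le_mul_of_nonneg_left (hg y z) hε

theorem stmt_3_general (n : ℕ) (iI : Fin n)
    (f₀ g : EuclideanSpace ℝ (Fin n) → EuclideanSpace ℝ (Fin n))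
    (hf₀ : ∀ x, f₀ x iI = x iI)
    (ε : ℝ) (hε : 0 ≤ ε)
    (fε : EuclideanSpace ℝ (Fin n) → EuclideanSpace ℝ (Fin n))
    (hfε : ∀ x, fε x = f₀ x + ε • g x)
    (Lg : ℝ) (hLg : 0 < Lg)
    (hLip : ∀ x₁ x₂, |g x₁ iI - g x₂ iI| ≤ Lg * ‖x₁ - x₂‖)
    (C lam : ℝ) (hlam : 0 < lam) (hlam1 : lam < 1)
    (m : ℕ)
    (w x : EuclideanSpace ℝ (Fin n))
    (hw : ∀ j : ℕ, ‖fε^[m + j] w - fε^[m + j] x‖ < C * lam ^ j) :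
    |(fε^[m] w - fε^[m] x) iI| ≤ ε * Lg * C / (1 - lam) := by
  set D : ℕ → ℝ := fun j => (fε^[m + j] w - fε^[m + j] x) iI
  have hfε_apply : ∀ y, fε y iI = y iI + ε * g y iI := fun y => by
    simp [hfε, hf₀]
  have hstep : ∀ j, dist (D j) (D (j + 1)) ≤ ε * Lg * C * lam ^ j := fun j => by
    simp only [D, ← add_assoc, Function.iterate_succ_apply']
    calc _ ≤ ε * Lg * ‖fε^[m + j] w - fε^[m + j] x‖ :=
          dist_apply_sub_map_sub_le hε hfε_apply hLip _ _
      _ ≤ ε * Lg * (C * lam ^ j) := by gcongr; exact (hw j).le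
      _ = ε * Lg * C * lam ^ j := by ring
  have hD : Tendsto D atTop (𝓝 0) :=
    squeeze_zero_norm (fun j => (PiLp.norm_apply_le _ iI).trans (hw j).le)
      (by simpa using (tendsto_pow_atTop_nhds_zero_of_lt_one hlam.le hlam1).const_mul C)
  simpa [D, Real.dist_eq] using dist_le_of_le_geometric_of_tendsto₀ _ _ hlam1 hstep hD

/-- Bound on the difference of the action coordinate `I` between a point and the point
on a stable fiber that it shadows forward in time. -/
theorem stmt_3 (n : ℕ) (hn : 1 ≤ n) (iI : Fin n)
    (f₀ g : EuclideanSpace ℝ (Fin n) → EuclideanSpace ℝ (Fin n))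
    (hf₀ : ∀ x, f₀ x iI = x iI)
    (ε : ℝ) (hε : 0 ≤ ε)
    (fε : EuclideanSpace ℝ (Fin n) → EuclideanSpace ℝ (Fin n))
    (hfε : ∀ x, fε x = f₀ x + ε • g x)
    (Lg : ℝ) (hLg : 0 < Lg)
    (hLip : ∀ x₁ x₂, |g x₁ iI - g x₂ iI| ≤ Lg * ‖x₁ - x₂‖)
    (C lam : ℝ) (hC : 0 < C) (hlam : 0 < lam) (hlam1 : lam < 1)
    (m : ℕ)
    (w x : EuclideanSpace ℝ (Fin n))
    (hw : ∀ j : ℕ, ‖fε^[m + j] w - fε^[m + j] x‖ < C * lam ^ j) :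
    |(fε^[m] w - fε^[m] x) iI| ≤ ε * Lg * C / (1 - lam) :=
  stmt_3_general n iI f₀ g hf₀ ε hε fε hfε Lg hLg hLip C lam hlam hlam1 m w x hw
end

section
/- Let n ≥ 1, let π_I : ℝⁿ → ℝ be the projection onto a distinguished coordinate, let f₀, g : ℝⁿ → ℝⁿ satisfy π_I(f₀(x)) = π_I(x) for all x ∈ ℝⁿ, let ε ≥ 0 and set f_ε := f₀ + ε·g. Assume f_ε is a bijection and that there is L_g > 0 with |π_I(g(x₁)) − π_I(g(x₂))| ≤ L_g‖x₁ − x₂‖ for all x₁, x₂ ∈ ℝⁿ. Let C > 0, λ ∈ (0,1), and let x, z ∈ ℝⁿ satisfy ‖f_ε^{−j}(x) − f_ε^{−j}(z)‖ < C·λ^{j} for all integers j ≥ 0. Then |π_I(x − z)| ≤ ε·(λ/(1−λ))·C·L_g. -/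
/-! Since `f₀` preserves the coordinate `I`, one backward step of `f_ε` changes the `I`-coordinate
of the difference of the two orbits by `ε` times a difference of values of `g`, hence by at most
`ε L_g C λ^{j+1}`. The orbits converge to each other, so `|π_I(x - z)|` is bounded by the sum of
this geometric series. -/

open Filter Topology

section PerturbedIntegrableMap

variable {ι : Type*} {f₀ g fε : EuclideanSpace ℝ ι → EuclideanSpace ℝ ι} {i : ι} {ε : ℝ}

lemma apply_eq_invFun_apply_add (hf₀ : ∀ x, f₀ x i = x i) (hfε : ∀ x, fε x = f₀ x + ε • g x)
    (hsurj : Function.Surjective fε) (w : EuclideanSpace ℝ ι) :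
    w i = Function.invFun fε w i + ε * g (Function.invFun fε w) i := by
  conv_lhs => rw [← Function.rightInverse_invFun hsurj w, hfε]
  simp [hf₀]

lemma abs_sub_sub_invFun_sub_le [Fintype ι] (hf₀ : ∀ x, f₀ x i = x i)
    (hfε : ∀ x, fε x = f₀ x + ε • g x) (hsurj : Function.Surjective fε) (hε : 0 ≤ ε) {Lg : ℝ}
    (hLip : ∀ x₁ x₂, |g x₁ i - g x₂ i| ≤ Lg * ‖x₁ - x₂‖) (w w' : EuclideanSpace ℝ ι) :
    |(w - w') i - (Function.invFun fε w - Function.invFun fε w') i|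
      ≤ ε * Lg * ‖Function.invFun fε w - Function.invFun fε w'‖ := by
  have hw := apply_eq_invFun_apply_add hf₀ hfε hsurj w
  have hw' := apply_eq_invFun_apply_add hf₀ hfε hsurj w'
  calc |(w - w') i - (Function.invFun fε w - Function.invFun fε w') i|
      = ε * |g (Function.invFun fε w) i - g (Function.invFun fε w') i| := by
        rw [← abs_of_nonneg hε, ← abs_mul, PiLp.sub_apply, PiLp.sub_apply, hw, hw']
        ring_nf
    _ ≤ ε * Lg * ‖Function.invFun fε w - Function.invFun fε w'‖ := by
        rw [mul_assoc]
        exact mul_le_mul_of_nonneg_left (hLip _ _) hε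

end PerturbedIntegrableMap

theorem stmt_4_general (n : ℕ) (iI : Fin n)
    (f₀ g : EuclideanSpace ℝ (Fin n) → EuclideanSpace ℝ (Fin n))
    (hf₀ : ∀ x, f₀ x iI = x iI)
    (ε : ℝ) (hε : 0 ≤ ε)
    (fε : EuclideanSpace ℝ (Fin n) → EuclideanSpace ℝ (Fin n))
    (hfε : ∀ x, fε x = f₀ x + ε • g x)
    (hbij : Function.Bijective fε)
    (Lg : ℝ) (hLg : 0 < Lg)
    (hLip : ∀ x₁ x₂, |g x₁ iI - g x₂ iI| ≤ Lg * ‖x₁ - x₂‖)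
    (C lam : ℝ) (hlam : 0 < lam) (hlam1 : lam < 1)
    (x z : EuclideanSpace ℝ (Fin n))
    (hx : ∀ j : ℕ, ‖(Function.invFun fε)^[j] x - (Function.invFun fε)^[j] z‖ < C * lam ^ j) :
    |(x - z) iI| ≤ ε * (lam / (1 - lam)) * C * Lg := by
  set T := Function.invFun fε
  set d : ℕ → ℝ := fun j => (T^[j] x - T^[j] z) iI
  have hd : Tendsto d atTop (𝓝 0) :=
    squeeze_zero_norm (fun j => (PiLp.norm_apply_le _ _).trans (hx j).le)
      (by simpa using (tendsto_pow_atTop_nhds_zero_of_lt_one hlam.le hlam1).const_mul C)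
  have hstep (j : ℕ) : dist (d j) (d (j + 1)) ≤ ε * Lg * C * lam * lam ^ j :=
    calc dist (d j) (d (j + 1)) ≤ ε * Lg * ‖T^[j + 1] x - T^[j + 1] z‖ := by
          simpa only [Real.dist_eq, d, Function.iterate_succ_apply'] using
            abs_sub_sub_invFun_sub_le hf₀ hfε hbij.surjective hε hLip (T^[j] x) (T^[j] z)
      _ ≤ ε * Lg * (C * lam ^ (j + 1)) := by gcongr; exact (hx _).le
      _ = ε * Lg * C * lam * lam ^ j := by ring
  calc |(x - z) iI| = dist (d 0) 0 := by simp [d]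
    _ ≤ ε * Lg * C * lam / (1 - lam) := dist_le_of_le_geometric_of_tendsto₀ _ _ hlam1 hstep hd
    _ = ε * (lam / (1 - lam)) * C * Lg := by ring

/-- Bound on the difference of the action coordinate `I` between a point and the base
point of the unstable fiber on which it lies. -/
theorem stmt_4 (n : ℕ) (hn : 1 ≤ n) (iI : Fin n)
    (f₀ g : EuclideanSpace ℝ (Fin n) → EuclideanSpace ℝ (Fin n))
    (hf₀ : ∀ x, f₀ x iI = x iI)
    (ε : ℝ) (hε : 0 ≤ ε)
    (fε : EuclideanSpace ℝ (Fin n) → EuclideanSpace ℝ (Fin n))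
    (hfε : ∀ x, fε x = f₀ x + ε • g x)
    (hbij : Function.Bijective fε)
    (Lg : ℝ) (hLg : 0 < Lg)
    (hLip : ∀ x₁ x₂, |g x₁ iI - g x₂ iI| ≤ Lg * ‖x₁ - x₂‖)
    (C lam : ℝ) (hC : 0 < C) (hlam : 0 < lam) (hlam1 : lam < 1)
    (x z : EuclideanSpace ℝ (Fin n))
    (hx : ∀ j : ℕ, ‖(Function.invFun fε)^[j] x - (Function.invFun fε)^[j] z‖ < C * lam ^ j) :
    |(x - z) iI| ≤ ε * (lam / (1 - lam)) * C * Lg :=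
  stmt_4_general n iI f₀ g hf₀ ε hε fε hfε hbij Lg hLg hLip C lam hlam hlam1 x z hx
end

section
/- Let 𝓛 > 0, r > 0, B = [−r, r] × [−𝓛r, 𝓛r] ⊂ ℝ², and for z ∈ ℝ² let C⁺(z) = { v ∈ ℝ² : 𝓛·|z₁ − v₁| ≥ |z₂ − v₂| }. Let F̃ : ℝ² → ℝ² be continuously differentiable. Suppose that every 2×2 real matrix A = (a_{ij}) whose entries satisfy inf_{x∈B} ∂F̃_i/∂x_j (x) ≤ a_{ij} ≤ sup_{x∈B} ∂F̃_i/∂x_j (x) for all i, j maps C⁺(0) into C⁺(0). Then F̃ satisfies cone conditions in B: for every z ∈ B, F̃(C⁺(z) ∩ B) ⊆ C⁺(F̃(z)). -/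
/-!
The cones are translation invariant: `v ∈ C⁺(z)` iff `z - v ∈ C⁺(0)`. For `v, z ∈ B` the mean
value theorem, applied to each component of `F` along the segment `[v, z] ⊆ B`, gives
`F z - F v = A (z - v)` where the `i`-th row of `A` is the `i`-th row of the Jacobian at some
point of `B`. Such an `A` lies in the interval enclosure `[DF(B)]`, so it maps `z - v ∈ C⁺(0)`
into `C⁺(0)`, i.e. `F v ∈ C⁺(F z)`.
-/

open Set

lemma IsCompact.sInf_image_le_and_le_sSup_image {α : Type*} [TopologicalSpace α] {K : Set α}
    (hK : IsCompact K) {g : α → ℝ} (hg : ContinuousOn g K) {x : α} (hx : x ∈ K) :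
    sInf (g '' K) ≤ g x ∧ g x ≤ sSup (g '' K) :=
  have himg : IsCompact (g '' K) := hK.image_of_continuousOn hg
  ⟨csInf_le himg.bddBelow (mem_image_of_mem g hx), le_csSup himg.bddAbove (mem_image_of_mem g hx)⟩

lemma Convex.exists_mem_sub_eq_fderiv_apply {E G : Type*} [NormedAddCommGroup E]
    [NormedSpace ℝ E] [NormedAddCommGroup G] [NormedSpace ℝ G] {F : E → G}
    (hF : Differentiable ℝ F) (φ : G →L[ℝ] ℝ) {B : Set E} (hB : Convex ℝ B) {x y : E}
    (hx : x ∈ B) (hy : y ∈ B) :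
    ∃ ξ ∈ B, φ (F y) - φ (F x) = φ (fderiv ℝ F ξ (y - x)) := by
  obtain ⟨ξ, hξ, h⟩ := domain_mvt (f := φ ∘ F) (f' := fun ξ => φ.comp (fderiv ℝ F ξ))
    (fun ξ _ => (φ.hasFDerivAt.comp ξ (hF ξ).hasFDerivAt).hasFDerivWithinAt) hB hx hy
  exact ⟨ξ, hB.segment_subset hx hy hξ, h⟩

lemma ContinuousLinearMap.apply_prod_eq {M : Type*} [AddCommGroup M] [Module ℝ M]
    [TopologicalSpace M] (f : ℝ × ℝ →L[ℝ] M) (u : ℝ × ℝ) :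
    f u = u.1 • f (1, 0) + u.2 • f (0, 1) := by
  conv_lhs => rw [show u = u.1 • ((1 : ℝ), (0 : ℝ)) + u.2 • ((0 : ℝ), (1 : ℝ)) by ext <;> simp]
  rw [map_add, map_smul, map_smul]

lemma Convex.exists_mem_sub_eq_partials {F : ℝ × ℝ → ℝ × ℝ} (hF : Differentiable ℝ F)
    (φ : ℝ × ℝ →L[ℝ] ℝ) {B : Set (ℝ × ℝ)} (hB : Convex ℝ B) {x y : ℝ × ℝ}
    (hx : x ∈ B) (hy : y ∈ B) :
    ∃ ξ ∈ B, φ (F y) - φ (F x) =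
      φ (fderiv ℝ F ξ (1, 0)) * (y - x).1 + φ (fderiv ℝ F ξ (0, 1)) * (y - x).2 := by
  obtain ⟨ξ, hξ, h⟩ := hB.exists_mem_sub_eq_fderiv_apply hF φ hx hy
  refine ⟨ξ, hξ, ?_⟩
  rw [h, (fderiv ℝ F ξ).apply_prod_eq (y - x), map_add, map_smul, map_smul, smul_eq_mul,
    smul_eq_mul, mul_comm, mul_comm (y - x).2]

theorem stmt_7_general (L r : ℝ)
    (F : ℝ × ℝ → ℝ × ℝ) (hF : ContDiff ℝ 1 F)
    (B : Set (ℝ × ℝ)) (hB : B = Set.Icc (-r) r ×ˢ Set.Icc (-(L * r)) (L * r))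
    (Cone : ℝ × ℝ → Set (ℝ × ℝ))
    (hCone : ∀ z, Cone z = {v | |z.2 - v.2| ≤ L * |z.1 - v.1|})
    (pd : Fin 2 → Fin 2 → ℝ × ℝ → ℝ)
    (hpd : ∀ x : ℝ × ℝ,
      pd 0 0 x = (fderiv ℝ F x (1, 0)).1 ∧ pd 0 1 x = (fderiv ℝ F x (0, 1)).1 ∧
      pd 1 0 x = (fderiv ℝ F x (1, 0)).2 ∧ pd 1 1 x = (fderiv ℝ F x (0, 1)).2)
    (hA : ∀ A : Matrix (Fin 2) (Fin 2) ℝ,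
      (∀ i j, sInf (pd i j '' B) ≤ A i j ∧ A i j ≤ sSup (pd i j '' B)) →
      ∀ v : ℝ × ℝ, v ∈ Cone 0 →
        (A 0 0 * v.1 + A 0 1 * v.2, A 1 0 * v.1 + A 1 1 * v.2) ∈ Cone 0) :
    ∀ z ∈ B, F '' (Cone z ∩ B) ⊆ Cone (F z) := by
  have hK : IsCompact B := hB ▸ isCompact_Icc.prod isCompact_Icc
  have hconv : Convex ℝ B := hB ▸ (convex_Icc _ _).prod (convex_Icc _ _)
  have hdF (e : ℝ × ℝ) : Continuous fun x => fderiv ℝ F x e :=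
    (hF.continuous_fderiv one_ne_zero).clm_apply continuous_const
  have hcont : ∀ i j, Continuous (pd i j) := by
    intro i j
    fin_cases i <;> fin_cases j
    · exact (funext fun x => (hpd x).1 : pd 0 0 = _) ▸ (hdF _).fst
    · exact (funext fun x => (hpd x).2.1 : pd 0 1 = _) ▸ (hdF _).fst
    · exact (funext fun x => (hpd x).2.2.1 : pd 1 0 = _) ▸ (hdF _).snd
    · exact (funext fun x => (hpd x).2.2.2 : pd 1 1 = _) ▸ (hdF _).snd
  rintro z hz _ ⟨v, ⟨hvC, hvB⟩, rfl⟩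
  have hDF := hF.differentiable one_ne_zero
  obtain ⟨ξ₀, hξ₀, h₀⟩ := hconv.exists_mem_sub_eq_partials hDF (.fst ℝ ℝ ℝ) hvB hz
  obtain ⟨ξ₁, hξ₁, h₁⟩ := hconv.exists_mem_sub_eq_partials hDF (.snd ℝ ℝ ℝ) hvB hz
  have hu : z - v ∈ Cone 0 := by simpa [hCone, abs_sub_comm] using hvC
  have key := hA !![pd 0 0 ξ₀, pd 0 1 ξ₀; pd 1 0 ξ₁, pd 1 1 ξ₁] (by
    intro i j
    fin_cases i <;> fin_cases j <;>
      exact hK.sInf_image_le_and_le_sSup_image (hcont _ _).continuousOn ‹_›) _ hu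
  simp only [hCone, mem_ofPred_eq, Prod.fst_zero, Prod.snd_zero, zero_sub, abs_neg,
    Matrix.of_apply, Matrix.cons_val', Matrix.cons_val_zero, Matrix.cons_val_one,
    Matrix.empty_val', Matrix.cons_val_fin_one, (hpd _).1, (hpd _).2.1, (hpd _).2.2.1,
    (hpd _).2.2.2] at key
  simp only [ContinuousLinearMap.coe_fst', ContinuousLinearMap.coe_snd'] at h₀ h₁
  simpa only [hCone, mem_ofPred_eq, h₀, h₁] using key

/-- If every matrix in the interval enclosure of the Jacobian of `F` over `B` maps the
cone `C⁺(0)` into itself, then `F` satisfies cone conditions in `B`. -/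
theorem stmt_7 (L r : ℝ) (hL : 0 < L) (hr : 0 < r)
    (F : ℝ × ℝ → ℝ × ℝ) (hF : ContDiff ℝ 1 F)
    (B : Set (ℝ × ℝ)) (hB : B = Set.Icc (-r) r ×ˢ Set.Icc (-(L * r)) (L * r))
    (Cone : ℝ × ℝ → Set (ℝ × ℝ))
    (hCone : ∀ z, Cone z = {v | |z.2 - v.2| ≤ L * |z.1 - v.1|})
    (pd : Fin 2 → Fin 2 → ℝ × ℝ → ℝ)
    (hpd : ∀ x : ℝ × ℝ,
      pd 0 0 x = (fderiv ℝ F x (1, 0)).1 ∧ pd 0 1 x = (fderiv ℝ F x (0, 1)).1 ∧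
      pd 1 0 x = (fderiv ℝ F x (1, 0)).2 ∧ pd 1 1 x = (fderiv ℝ F x (0, 1)).2)
    (hA : ∀ A : Matrix (Fin 2) (Fin 2) ℝ,
      (∀ i j, sInf (pd i j '' B) ≤ A i j ∧ A i j ≤ sSup (pd i j '' B)) →
      ∀ v : ℝ × ℝ, v ∈ Cone 0 →
        (A 0 0 * v.1 + A 0 1 * v.2, A 1 0 * v.1 + A 1 1 * v.2) ∈ Cone 0) :
    ∀ z ∈ B, F '' (Cone z ∩ B) ⊆ Cone (F z) :=
  stmt_7_general L r F hF B hB Cone hCone pd hpd hA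
end

section
/- Let α ∈ ℝ and let f : ℂ² → ℂ² be the complex Chirikov standard map f(z₁, z₂) = (z₁ + z₂ + α·sin(z₁), z₂ + α·sin(z₁)). Fix z₀ ∈ ℝ² ⊂ ℂ² and constants 0 < r* < R with r* ≤ 1. Define the first-order Taylor remainder 𝓡_z(w) := f(z + w) − f(z) − Df(z)w. Then for all z ∈ ℂ² with ‖z − z₀‖ ≤ R and all w ∈ ℂ² with ‖w‖ ≤ r*: (i) ‖𝓡_z(w)‖ ≤ (|α|·e^R·(e^{r*}+1)/2)·‖w‖²; (ii) ‖D_w 𝓡_z(w)‖ ≤ (|α|·e^R·(e^{r*}+1))·‖w‖; and (iii) ‖Df(z)‖ ≤ 2 + |α|·e^R. -/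
/-!
Writing `c = cos z₁`, the Jacobian of the standard map is `w ↦ (w₁ + w₂ + α c w₁, w₂ + α c w₁)`,
so the Taylor remainder is `α (r, r)` with `r = sin (z₁ + w₁) - sin z₁ - cos z₁ · w₁`, and the
derivative of the remainder is the difference of two Jacobians, of norm at most
`|α| ‖cos (z₁ + w₁) - cos z₁‖`. Both scalar quantities are controlled by the addition formulas,
the Taylor bounds `‖cos h - 1‖ ≤ 2/3 ‖h‖²`, `‖sin h - h‖ ≤ 1/3 ‖h‖³` for `‖h‖ ≤ 1`, and
`‖sin x‖, ‖cos x‖ ≤ e^{|Im x|}`; since `z₀` is real, `|Im z₁| ≤ ‖z - z₀‖ ≤ R`.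
-/

open Complex
open ContinuousLinearMap (fst snd opNorm_prod opNorm_le_bound)

namespace Complex

lemma norm_exp_mul_I_le (z : ℂ) : ‖exp (z * I)‖ ≤ Real.exp |z.im| := by
  rw [norm_exp, mul_I_re, Real.exp_le_exp]
  exact neg_le_abs _

lemma norm_cos_le_exp_abs_im (z : ℂ) : ‖cos z‖ ≤ Real.exp |z.im| := by
  have h₁ := norm_exp_mul_I_le z
  have h₂ := norm_exp_mul_I_le (-z)
  rw [neg_im, abs_neg] at h₂
  calc ‖cos z‖ = ‖exp (z * I) + exp (-z * I)‖ / 2 := by rw [cos, norm_div, Complex.norm_two]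
    _ ≤ (‖exp (z * I)‖ + ‖exp (-z * I)‖) / 2 := by gcongr; exact norm_add_le _ _
    _ ≤ Real.exp |z.im| := by linarith

lemma norm_sin_le_exp_abs_im (z : ℂ) : ‖sin z‖ ≤ Real.exp |z.im| := by
  have h₁ := norm_exp_mul_I_le z
  have h₂ := norm_exp_mul_I_le (-z)
  rw [neg_im, abs_neg] at h₂
  calc ‖sin z‖ = ‖exp (-z * I) - exp (z * I)‖ / 2 := by
        rw [sin, norm_div, norm_mul, norm_I, mul_one, Complex.norm_two]
    _ ≤ (‖exp (-z * I)‖ + ‖exp (z * I)‖) / 2 := by gcongr; exact norm_sub_le _ _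
    _ ≤ Real.exp |z.im| := by linarith

lemma norm_cos_sub_one_le {x : ℂ} (hx : ‖x‖ ≤ 1) : ‖cos x - 1‖ ≤ 2 / 3 * ‖x‖ ^ 2 := by
  have h₄ : ‖x‖ ^ 4 ≤ ‖x‖ ^ 2 := pow_le_pow_of_le_one (norm_nonneg x) hx (by norm_num)
  calc ‖cos x - 1‖ = ‖(cos x - (1 - x ^ 2 / 2)) - x ^ 2 / 2‖ := by ring_nf
    _ ≤ ‖x‖ ^ 4 * (5 / 96) + ‖x‖ ^ 2 / 2 := by
        refine (norm_sub_le _ _).trans (add_le_add (cos_bound hx) ?_)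
        rw [norm_div, norm_pow, Complex.norm_two]
    _ ≤ 2 / 3 * ‖x‖ ^ 2 := by linarith [pow_nonneg (norm_nonneg x) 2]

lemma norm_sin_sub_self_le {x : ℂ} (hx : ‖x‖ ≤ 1) : ‖sin x - x‖ ≤ 1 / 3 * ‖x‖ ^ 3 := by
  have h₅ : ‖x‖ ^ 5 ≤ ‖x‖ ^ 3 := pow_le_pow_of_le_one (norm_nonneg x) hx (by norm_num)
  calc ‖sin x - x‖ = ‖(sin x - (x - x ^ 3 / 6)) - x ^ 3 / 6‖ := by ring_nf
    _ ≤ ‖x‖ ^ 5 / 100 + ‖x‖ ^ 3 / 6 := by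
        refine (norm_sub_le _ _).trans (add_le_add (sin_bound hx) ?_)
        rw [norm_div, norm_pow, show ‖(6 : ℂ)‖ = 6 by norm_num]
    _ ≤ 1 / 3 * ‖x‖ ^ 3 := by linarith [pow_nonneg (norm_nonneg x) 3]

section AddFormulaBounds

variable {x h : ℂ} {M : ℝ}

lemma norm_sin_add_sub_sin_sub_le (hh : ‖h‖ ≤ 1) (hs : ‖sin x‖ ≤ M) (hc : ‖cos x‖ ≤ M) :
    ‖sin (x + h) - sin x - cos x * h‖ ≤ M * ‖h‖ ^ 2 := by
  have hM : 0 ≤ M := (norm_nonneg _).trans hs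
  have h₃ : ‖h‖ ^ 3 ≤ ‖h‖ ^ 2 := pow_le_pow_of_le_one (norm_nonneg h) hh (by norm_num)
  calc ‖sin (x + h) - sin x - cos x * h‖ = ‖sin x * (cos h - 1) + cos x * (sin h - h)‖ := by
        rw [sin_add]; ring_nf
    _ ≤ M * (2 / 3 * ‖h‖ ^ 2) + M * (1 / 3 * ‖h‖ ^ 3) := by
        refine (norm_add_le _ _).trans ?_
        rw [norm_mul, norm_mul]
        gcongr
        exacts [norm_cos_sub_one_le hh, norm_sin_sub_self_le hh]
    _ ≤ M * ‖h‖ ^ 2 := by nlinarith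

lemma norm_cos_add_sub_cos_le (hh : ‖h‖ ≤ 1) (hs : ‖sin x‖ ≤ M) (hc : ‖cos x‖ ≤ M) :
    ‖cos (x + h) - cos x‖ ≤ 2 * M * ‖h‖ := by
  have hM : 0 ≤ M := (norm_nonneg _).trans hs
  have h₂ : ‖h‖ ^ 2 ≤ ‖h‖ := by nlinarith [norm_nonneg h]
  have h₃ : ‖h‖ ^ 3 ≤ ‖h‖ ^ 2 := pow_le_pow_of_le_one (norm_nonneg h) hh (by norm_num)
  have hsin : ‖sin h‖ ≤ ‖h‖ + 1 / 3 * ‖h‖ ^ 3 := by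
    calc ‖sin h‖ = ‖h + (sin h - h)‖ := by ring_nf
      _ ≤ ‖h‖ + 1 / 3 * ‖h‖ ^ 3 :=
          (norm_add_le _ _).trans (by gcongr; exact norm_sin_sub_self_le hh)
  calc ‖cos (x + h) - cos x‖ = ‖cos x * (cos h - 1) - sin x * sin h‖ := by
        rw [cos_add]; ring_nf
    _ ≤ M * (2 / 3 * ‖h‖ ^ 2) + M * (‖h‖ + 1 / 3 * ‖h‖ ^ 3) := by
        refine (norm_sub_le _ _).trans ?_
        rw [norm_mul, norm_mul]
        gcongr
        exact norm_cos_sub_one_le hh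
    _ ≤ 2 * M * ‖h‖ := by nlinarith

end AddFormulaBounds

end Complex

theorem HasFDerivAt.comp_add_sub_sub {𝕜 E F : Type*} [NontriviallyNormedField 𝕜]
    [NormedAddCommGroup E] [NormedSpace 𝕜 E] [NormedAddCommGroup F] [NormedSpace 𝕜 F]
    {f : E → F} {f' : E →L[𝕜] F} {z w : E} (L : E →L[𝕜] F) (hf : HasFDerivAt f f' (z + w)) :
    HasFDerivAt (fun w' => f (z + w') - f z - L w') (f' - L) w := by
  refine (((hf.comp w ((hasFDerivAt_id w).const_add z)).sub_const (f z)).sub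
    L.hasFDerivAt).congr_fderiv ?_
  simp

noncomputable section

def standardMap (a : ℂ) (z : ℂ × ℂ) : ℂ × ℂ :=
  (z.1 + z.2 + a * sin z.1, z.2 + a * sin z.1)

/-- The Jacobian of `standardMap a` at a point with `cos z₁ = c`. -/
def standardMapDeriv (a c : ℂ) : ℂ × ℂ →L[ℂ] ℂ × ℂ :=
  (fst ℂ ℂ ℂ + snd ℂ ℂ ℂ).prod (snd ℂ ℂ ℂ) + (a * c) • (fst ℂ ℂ ℂ).prod (fst ℂ ℂ ℂ)

end

@[simp]
lemma standardMapDeriv_apply (a c : ℂ) (w : ℂ × ℂ) :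
    standardMapDeriv a c w = (w.1 + w.2 + a * c * w.1, w.2 + a * c * w.1) := by
  simp [standardMapDeriv]

lemma hasFDerivAt_standardMap (a : ℂ) (z : ℂ × ℂ) :
    HasFDerivAt (standardMap a) (standardMapDeriv a (cos z.1)) z := by
  have hsin₁ : HasFDerivAt (fun z : ℂ × ℂ => sin z.1) (cos z.1 • fst ℂ ℂ ℂ) z :=
    (hasDerivAt_sin z.1).comp_hasFDerivAt z hasFDerivAt_fst
  have hsin : HasFDerivAt (fun z : ℂ × ℂ => a * sin z.1) ((a * cos z.1) • fst ℂ ℂ ℂ) z := by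
    rw [← smul_smul]; exact hsin₁.const_mul a
  refine (((hasFDerivAt_fst.add hasFDerivAt_snd).add hsin).prodMk
    (hasFDerivAt_snd.add hsin)).congr_fderiv ?_
  ext <;> simp

lemma standardMap_remainder (a c : ℂ) (z w : ℂ × ℂ) :
    standardMap a (z + w) - standardMap a z - standardMapDeriv a c w =
      (a * (sin (z.1 + w.1) - sin z.1 - c * w.1), a * (sin (z.1 + w.1) - sin z.1 - c * w.1)) := by
  ext <;> simp [standardMap] <;> ring

lemma norm_standardMapDeriv_le (a c : ℂ) : ‖standardMapDeriv a c‖ ≤ 2 + ‖a‖ * ‖c‖ := by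
  have hshear : ‖(fst ℂ ℂ ℂ + snd ℂ ℂ ℂ).prod (snd ℂ ℂ ℂ)‖ ≤ 2 := by
    rw [opNorm_prod, Prod.norm_mk, max_le_iff]
    constructor <;> linarith [norm_add_le (fst ℂ ℂ ℂ) (snd ℂ ℂ ℂ),
      ContinuousLinearMap.norm_fst_le ℂ ℂ ℂ, ContinuousLinearMap.norm_snd_le ℂ ℂ ℂ]
  have hdiag : ‖(fst ℂ ℂ ℂ).prod (fst ℂ ℂ ℂ)‖ ≤ 1 := by
    rw [opNorm_prod, Prod.norm_mk, max_self]; exact ContinuousLinearMap.norm_fst_le ℂ ℂ ℂ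
  calc ‖standardMapDeriv a c‖ ≤ 2 + ‖a * c‖ * 1 := by
        refine (norm_add_le _ _).trans (add_le_add hshear ?_)
        rw [norm_smul]; gcongr
    _ = 2 + ‖a‖ * ‖c‖ := by rw [mul_one, norm_mul]

lemma norm_standardMapDeriv_sub_le (a c c' : ℂ) :
    ‖standardMapDeriv a c - standardMapDeriv a c'‖ ≤ ‖a‖ * ‖c - c'‖ := by
  refine opNorm_le_bound _ (by positivity) fun v => ?_
  have hv : standardMapDeriv a c v - standardMapDeriv a c' v =
      (a * (c - c') * v.1, a * (c - c') * v.1) := by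
    ext <;> simp <;> ring
  rw [sub_apply, hv, Prod.norm_mk, max_self, norm_mul, norm_mul]
  gcongr
  exact norm_fst_le v

lemma norm_standardMap_remainder_le (a : ℂ) (z w : ℂ × ℂ) (hw : ‖w‖ ≤ 1) {M : ℝ}
    (hs : ‖sin z.1‖ ≤ M) (hc : ‖cos z.1‖ ≤ M) :
    ‖standardMap a (z + w) - standardMap a z - standardMapDeriv a (cos z.1) w‖ ≤
      ‖a‖ * M * ‖w‖ ^ 2 := by
  have hM : 0 ≤ M := (norm_nonneg _).trans hs
  rw [standardMap_remainder, Prod.norm_mk, max_self, norm_mul, mul_assoc]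
  gcongr
  calc _ ≤ M * ‖w.1‖ ^ 2 := norm_sin_add_sub_sin_sub_le ((norm_fst_le w).trans hw) hs hc
    _ ≤ M * ‖w‖ ^ 2 := by gcongr; exact norm_fst_le w

lemma abs_im_fst_le {z z₀ : ℂ × ℂ} {R : ℝ} (hz₀ : z₀.1.im = 0) (hz : ‖z - z₀‖ ≤ R) :
    |z.1.im| ≤ R :=
  calc |z.1.im| = |(z - z₀).1.im| := by simp [hz₀]
    _ ≤ ‖(z - z₀).1‖ := abs_im_le_norm _
    _ ≤ R := (norm_fst_le _).trans hz

theorem stmt_10_general (α : ℝ)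
    (f : ℂ × ℂ → ℂ × ℂ)
    (hf : ∀ z : ℂ × ℂ,
      f z = (z.1 + z.2 + (α : ℂ) * Complex.sin z.1, z.2 + (α : ℂ) * Complex.sin z.1))
    (z₀ : ℂ × ℂ) (hz₀ : z₀.1.im = 0 ∧ z₀.2.im = 0)
    (R rstar : ℝ) (hrstar1 : rstar ≤ 1) :
    ∀ z w : ℂ × ℂ, ‖z - z₀‖ ≤ R → ‖w‖ ≤ rstar →
      ‖f (z + w) - f z - fderiv ℂ f z w‖
          ≤ |α| * Real.exp R * (Real.exp rstar + 1) / 2 * ‖w‖ ^ 2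
      ∧ ‖fderiv ℂ (fun w' => f (z + w') - f z - fderiv ℂ f z w') w‖
          ≤ |α| * Real.exp R * (Real.exp rstar + 1) * ‖w‖
      ∧ ‖fderiv ℂ f z‖ ≤ 2 + |α| * Real.exp R := by
  obtain rfl : f = standardMap α := funext hf
  intro z w hz hw
  have him := abs_im_fst_le hz₀.1 hz
  have hsin : ‖sin z.1‖ ≤ Real.exp R := (norm_sin_le_exp_abs_im _).trans (Real.exp_le_exp.2 him)
  have hcos : ‖cos z.1‖ ≤ Real.exp R := (norm_cos_le_exp_abs_im _).trans (Real.exp_le_exp.2 him)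
  have hw₁ : ‖w‖ ≤ 1 := hw.trans hrstar1
  have hexp : 1 ≤ Real.exp rstar := Real.one_le_exp ((norm_nonneg w).trans hw)
  have hC : 0 ≤ |α| * Real.exp R := by positivity
  have hα : ‖(α : ℂ)‖ = |α| := by rw [norm_real, Real.norm_eq_abs]
  rw [(hasFDerivAt_standardMap α z).fderiv,
    ((hasFDerivAt_standardMap α (z + w)).comp_add_sub_sub _).fderiv]
  refine ⟨?_, ?_, ?_⟩
  · calc _ ≤ |α| * Real.exp R * ‖w‖ ^ 2 := hα ▸ norm_standardMap_remainder_le _ z w hw₁ hsin hcos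
      _ ≤ _ := by nlinarith [mul_nonneg hC (sq_nonneg ‖w‖)]
  · calc _ ≤ |α| * ‖cos (z.1 + w.1) - cos z.1‖ := hα ▸ norm_standardMapDeriv_sub_le _ _ _
      _ ≤ |α| * (2 * Real.exp R * ‖w.1‖) := by
          gcongr; exact norm_cos_add_sub_cos_le ((norm_fst_le w).trans hw₁) hsin hcos
      _ ≤ _ := by nlinarith [mul_nonneg hC (norm_nonneg w), norm_fst_le w, norm_nonneg w.1]
  · calc _ ≤ 2 + |α| * ‖cos z.1‖ := hα ▸ norm_standardMapDeriv_le _ _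
      _ ≤ _ := by gcongr

/-- Explicit constants `C₁, C₂, C₃` for the complex Chirikov standard map:
bounds on the first order Taylor remainder, its derivative, and the Jacobian,
valid near a real base point. -/
theorem stmt_10 (α : ℝ)
    (f : ℂ × ℂ → ℂ × ℂ)
    (hf : ∀ z : ℂ × ℂ,
      f z = (z.1 + z.2 + (α : ℂ) * Complex.sin z.1, z.2 + (α : ℂ) * Complex.sin z.1))
    (z₀ : ℂ × ℂ) (hz₀ : z₀.1.im = 0 ∧ z₀.2.im = 0)
    (R rstar : ℝ) (hrstar : 0 < rstar) (hRr : rstar < R) (hrstar1 : rstar ≤ 1) :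
    ∀ z w : ℂ × ℂ, ‖z - z₀‖ ≤ R → ‖w‖ ≤ rstar →
      ‖f (z + w) - f z - fderiv ℂ f z w‖
          ≤ |α| * Real.exp R * (Real.exp rstar + 1) / 2 * ‖w‖ ^ 2
      ∧ ‖fderiv ℂ (fun w' => f (z + w') - f z - fderiv ℂ f z w') w‖
          ≤ |α| * Real.exp R * (Real.exp rstar + 1) * ‖w‖
      ∧ ‖fderiv ℂ f z‖ ≤ 2 + |α| * Real.exp R :=
  stmt_10_general α f hf z₀ hz₀ R rstar hrstar1
end

section
/- Let N ≥ 0, let H : D → ℂ be analytic and bounded on the open unit disk D with H(0) = H′(0) = … = H^{(N)}(0) = 0, and let Q : D → ℂ be analytic and bounded. Then sup_{σ∈D} | ∫₀^σ H(z)·Q(z) dz | ≤ (‖Q‖₀ / (N+2)) · ‖H‖₀, where the integral is taken along the straight segment from 0 to σ and ‖·‖₀ denotes the supremum norm over D. -/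
/-!
By the higher-order Schwarz lemma, a tail `H` bounded by `MH` on the unit disk satisfies
`‖H z‖ ≤ MH * ‖z‖ ^ (N + 1)`. Along the segment `t ↦ t σ` the integrand is therefore bounded by
`MH * MQ * t ^ (N + 1)`, whose integral over `[0, 1]` is `MH * MQ / (N + 2)`.
-/

open Metric Set Filter Asymptotics
open scoped Topology

theorem AnalyticAt.isBigO_pow_of_iteratedDeriv_eq_zero {𝕜 : Type*} [NontriviallyNormedField 𝕜]
    [CompleteSpace 𝕜] [CharZero 𝕜] {f : 𝕜 → 𝕜} {x : 𝕜} {n : ℕ} (hf : AnalyticAt 𝕜 f x)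
    (hvanish : ∀ k ≤ n, iteratedDeriv k f x = 0) :
    (fun y ↦ f (x + y)) =O[𝓝 0] fun y ↦ ‖y‖ ^ (n + 1) := by
  have hsum : ∀ y, (FormalMultilinearSeries.ofScalars 𝕜
      (fun k ↦ iteratedDeriv k f x / k.factorial)).partialSum (n + 1) y = 0 := fun y ↦
    Finset.sum_eq_zero fun k hk ↦ by
      simp [hvanish k (Nat.lt_succ_iff.mp (Finset.mem_range.mp hk))]
  simpa [hsum] using hf.hasFPowerSeriesAt.isBigO_sub_partialSum_pow (n + 1)

theorem Complex.norm_le_mul_div_pow_of_iteratedDeriv_eq_zero {f : ℂ → ℂ} {R M : ℝ} {n : ℕ}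
    (hf : AnalyticOnNhd ℂ f (ball 0 R)) (hM : ∀ z ∈ ball (0 : ℂ) R, ‖f z‖ ≤ M)
    (hvanish : ∀ k ≤ n, iteratedDeriv k f 0 = 0) {z : ℂ} (hz : z ∈ ball (0 : ℂ) R) :
    ‖f z‖ ≤ M * (‖z‖ / R) ^ (n + 1) := by
  have hf0 : f 0 = 0 := by simpa using hvanish 0 n.zero_le
  have hmaps : MapsTo f (ball 0 R) (closedBall (f 0) M) := fun w hw ↦ by
    simpa [hf0] using hM w hw
  have hO := (hf 0 (mem_ball_self (pos_of_mem_ball hz))).isBigO_pow_of_iteratedDeriv_eq_zero hvanish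
  have ho : (f · - f 0) =o[𝓝 0] fun w ↦ ‖w - 0‖ ^ n := by
    simpa [hf0] using hO.trans_isLittleO (isLittleO_norm_pow_norm_pow n.lt_succ_self)
  simpa [hf0] using dist_le_mul_div_pow_of_mapsTo_ball_of_isLittleO hf.differentiableOn hmaps ho hz

theorem intervalIntegral.norm_integral_le_of_norm_le_mul_pow {E : Type*} [NormedAddCommGroup E]
    [NormedSpace ℝ E] {F : ℝ → E} {C : ℝ} {n : ℕ} (hF : ∀ t ∈ Ioc (0 : ℝ) 1, ‖F t‖ ≤ C * t ^ n) :
    ‖∫ t in (0 : ℝ)..1, F t‖ ≤ C / (n + 1) := by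
  calc ‖∫ t in (0 : ℝ)..1, F t‖ ≤ ∫ t in (0 : ℝ)..1, C * t ^ n :=
        norm_integral_le_of_norm_le zero_le_one (MeasureTheory.ae_of_all _ hF)
          ((continuous_const.mul (continuous_pow n)).intervalIntegrable 0 1)
    _ = C / (n + 1) := by simp [integral_pow, div_eq_mul_inv]

theorem stmt_13_general (N : ℕ) (H Q : ℂ → ℂ)
    (hH : AnalyticOnNhd ℂ H (Metric.ball 0 1))
    (MH MQ : ℝ)
    (hMH : ∀ σ ∈ Metric.ball (0 : ℂ) 1, ‖H σ‖ ≤ MH)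
    (hMQ : ∀ σ ∈ Metric.ball (0 : ℂ) 1, ‖Q σ‖ ≤ MQ)
    (hvanish : ∀ k ≤ N, iteratedDeriv k H 0 = 0) :
    ∀ σ ∈ Metric.ball (0 : ℂ) 1,
      ‖∫ t in (0 : ℝ)..1, H ((t : ℂ) * σ) * Q ((t : ℂ) * σ) * σ‖
        ≤ MQ / (N + 2) * MH := by
  intro σ hσ
  have hσ1 : ‖σ‖ < 1 := mem_ball_zero_iff.mp hσ
  have hMH0 : 0 ≤ MH := (norm_nonneg _).trans (hMH 0 (mem_ball_self one_pos))
  have hMQ0 : 0 ≤ MQ := (norm_nonneg _).trans (hMQ 0 (mem_ball_self one_pos))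
  have hbound : ∀ t ∈ Ioc (0 : ℝ) 1,
      ‖H ((t : ℂ) * σ) * Q ((t : ℂ) * σ) * σ‖ ≤ MH * MQ * t ^ (N + 1) := by
    rintro t ⟨ht0, ht1⟩
    have hnorm : ‖(t : ℂ) * σ‖ = t * ‖σ‖ := by
      rw [norm_mul, Complex.norm_real, Real.norm_of_nonneg ht0.le]
    have hmem : (t : ℂ) * σ ∈ ball (0 : ℂ) 1 := by
      rw [mem_ball_zero_iff, hnorm]
      exact (mul_le_of_le_one_left (norm_nonneg σ) ht1).trans_lt hσ1
    have htσ : ‖(t : ℂ) * σ‖ ≤ t := hnorm ▸ mul_le_of_le_one_right ht0.le hσ1.le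
    have hHt : ‖H ((t : ℂ) * σ)‖ ≤ MH * t ^ (N + 1) := by
      have := Complex.norm_le_mul_div_pow_of_iteratedDeriv_eq_zero hH hMH hvanish hmem
      rw [div_one] at this
      exact this.trans (by gcongr)
    calc ‖H ((t : ℂ) * σ) * Q ((t : ℂ) * σ) * σ‖
        = ‖H ((t : ℂ) * σ)‖ * ‖Q ((t : ℂ) * σ)‖ * ‖σ‖ := by rw [norm_mul, norm_mul]
      _ ≤ MH * t ^ (N + 1) * MQ * 1 := by gcongr; exact hMQ _ hmem
      _ = MH * MQ * t ^ (N + 1) := by ring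
  calc _ ≤ MH * MQ / ((N + 1 : ℕ) + 1) :=
        intervalIntegral.norm_integral_le_of_norm_le_mul_pow hbound
    _ = MQ / (N + 2) * MH := by push_cast; ring

/-- Operator-norm estimate for the integral of a product against an analytic `N`-tail:
if `H` is analytic and bounded on the unit disk and vanishes to order `N` at `0`,
then the segment integral `∫₀^σ H(z)Q(z) dz` is bounded by `(‖Q‖₀/(N+2))·‖H‖₀`. -/
theorem stmt_13 (N : ℕ) (H Q : ℂ → ℂ)
    (hH : AnalyticOnNhd ℂ H (Metric.ball 0 1))
    (hQ : AnalyticOnNhd ℂ Q (Metric.ball 0 1))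
    (MH MQ : ℝ)
    (hMH : ∀ σ ∈ Metric.ball (0 : ℂ) 1, ‖H σ‖ ≤ MH)
    (hMQ : ∀ σ ∈ Metric.ball (0 : ℂ) 1, ‖Q σ‖ ≤ MQ)
    (hvanish : ∀ k ≤ N, iteratedDeriv k H 0 = 0) :
    ∀ σ ∈ Metric.ball (0 : ℂ) 1,
      ‖∫ t in (0 : ℝ)..1, H ((t : ℂ) * σ) * Q ((t : ℂ) * σ) * σ‖
        ≤ MQ / (N + 2) * MH :=
  stmt_13_general N H Q hH MH MQ hMH hMQ hvanish
end

section
/- Let M ≥ 1, let F : ℝ² → ℝ² and P_u, P_s : ℝ → ℝ² be continuously differentiable, and define 𝓕 : ℝ^{2M+2} → ℝ^{2M+2} by 𝓕(x, v₀, …, v_{M−1}, y) = (P_u(x) − v₀, F(v₀) − v₁, …, F(v_{M−2}) − v_{M−1}, F(v_{M−1}) − P_s(y)). Suppose p* = (x*, v₀*, …, v_{M−1}*, y*) satisfies 𝓕(p*) = 0 and the Jacobian matrix D𝓕(p*) is invertible. Then the two vectors DF(v_{M−1}*)·DF(v_{M−2}*)···DF(v₀*)·P_u′(x*) (which equals d/dx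 [F^{M}(P_u(x))] at x = x*) and P_s′(y*) are linearly independent in ℝ². -/
/-!
If `s • w M + t • P_s'(y*) = 0`, then `s • w` is an orbit of the linear maps `DF(vᵢ*)` running
from `DP_u(x*) s` to `DP_s(y*) (-t)`, so `(s, s • w₀, …, s • w_{M-1}, -t)` is a zero of the
shooting map of the linearised data. That linearised shooting map is `D𝓕(p*)`, whose
injectivity forces `s = t = 0`.
-/

variable {M : ℕ}

/-- The step maps `F i` may depend on `i`, so that the linearisation of a shooting map along an
orbit segment is again a shooting map. -/
def shootingMap {X U V : Type*} [AddGroup X] (hM : 1 ≤ M) (F : Fin M → X → X) (Pu : U → X)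
    (Ps : V → X) (p : U × (Fin M → X) × V) : Fin (M + 1) → X :=
  Fin.cons (Pu p.1 - p.2.1 ⟨0, hM⟩) fun i : Fin M =>
    if h : (i : ℕ) + 1 < M then F i (p.2.1 i) - p.2.1 ⟨(i : ℕ) + 1, h⟩
    else F i (p.2.1 i) - Ps p.2.2

theorem shootingMap_eq_zero_of_orbit {X U V : Type*} [AddGroup X] (hM : 1 ≤ M)
    {F : Fin M → X → X} {Pu : U → X} {Ps : V → X} {x : U} {y : V} {w : ℕ → X}
    (h0 : w 0 = Pu x) (hstep : ∀ i : Fin M, w (i + 1) = F i (w i)) (hend : w M = Ps y) :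
    shootingMap hM F Pu Ps (x, fun i => w i, y) = 0 := by
  ext j : 1
  refine Fin.cases ?_ (fun i => ?_) j
  · simp [shootingMap, h0]
  · by_cases h : (i : ℕ) + 1 < M
    · simp [shootingMap, h, hstep i]
    · have hlast := hstep i
      rw [show (i : ℕ) + 1 = M by omega, hend] at hlast
      simp [shootingMap, h, ← hlast]

section Derivative

variable {𝕜 : Type*} [NontriviallyNormedField 𝕜]
  {E U V : Type*} [NormedAddCommGroup E] [NormedSpace 𝕜 E] [NormedAddCommGroup U]
  [NormedSpace 𝕜 U] [NormedAddCommGroup V] [NormedSpace 𝕜 V]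
  {F : Fin M → E → E} {Pu : U → E} {Ps : V → E} {p : U × (Fin M → E) × V}

open ContinuousLinearMap in
theorem fderiv_shootingMap_apply (hM : 1 ≤ M)
    (hF : ∀ i, DifferentiableAt 𝕜 (F i) (p.2.1 i)) (hPu : DifferentiableAt 𝕜 Pu p.1)
    (hPs : DifferentiableAt 𝕜 Ps p.2.2) (q : U × (Fin M → E) × V) :
    fderiv 𝕜 (shootingMap hM F Pu Ps) p q =
      shootingMap hM (fun i => fderiv 𝕜 (F i) (p.2.1 i)) (fderiv 𝕜 Pu p.1)
        (fderiv 𝕜 Ps p.2.2) q := by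
  let πx : (U × (Fin M → E) × V) →L[𝕜] U := fst 𝕜 _ _
  let πv (i : Fin M) : (U × (Fin M → E) × V) →L[𝕜] E :=
    (proj i).comp ((fst 𝕜 _ V).comp (snd 𝕜 U _))
  let πy : (U × (Fin M → E) × V) →L[𝕜] V := (snd 𝕜 _ V).comp (snd 𝕜 U _)
  let DF (i : Fin M) := (fderiv 𝕜 (F i) (p.2.1 i)).comp (πv i)
  let L : (U × (Fin M → E) × V) →L[𝕜] (Fin (M + 1) → E) :=
    ((fderiv 𝕜 Pu p.1).comp πx - πv ⟨0, hM⟩).finCons (pi fun i =>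
      if h : (i : ℕ) + 1 < M then DF i - πv ⟨(i : ℕ) + 1, h⟩
      else DF i - (fderiv 𝕜 Ps p.2.2).comp πy)
  have hL : HasFDerivAt (shootingMap hM F Pu Ps) L p := by
    have hDF (i : Fin M) :
        HasFDerivAt (fun p : U × (Fin M → E) × V => F i (p.2.1 i)) (DF i) p :=
      (hF i).hasFDerivAt.comp p (πv i).hasFDerivAt
    refine HasFDerivAt.finCons ((hPu.hasFDerivAt.comp p πx.hasFDerivAt).sub (πv _).hasFDerivAt)
      (hasFDerivAt_pi.2 fun i => ?_)
    by_cases h : (i : ℕ) + 1 < M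
    · simp only [h, dite_true]
      exact (hDF i).sub (πv _).hasFDerivAt
    · simp only [h, dite_false]
      exact (hDF i).sub (hPs.hasFDerivAt.comp p πy.hasFDerivAt)
  rw [hL.fderiv]
  ext j : 1
  refine Fin.cases ?_ (fun i => ?_) j
  · simp [L, shootingMap, πx, πv]
  · by_cases h : (i : ℕ) + 1 < M <;> simp [L, shootingMap, h, DF, πv, πy]

end Derivative

variable {𝕜 : Type*} [NontriviallyNormedField 𝕜] {E : Type*} [NormedAddCommGroup E]
  [NormedSpace 𝕜 E]

theorem linearIndependent_of_injective_fderiv_shootingMap (hM : 1 ≤ M)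
    {F : Fin M → E → E} {Pu Ps : 𝕜 → E} {p : 𝕜 × (Fin M → E) × 𝕜}
    (hF : ∀ i, DifferentiableAt 𝕜 (F i) (p.2.1 i)) (hPu : DifferentiableAt 𝕜 Pu p.1)
    (hPs : DifferentiableAt 𝕜 Ps p.2.2)
    (hinj : Function.Injective (fderiv 𝕜 (shootingMap hM F Pu Ps) p))
    (w : ℕ → E) (hw0 : w 0 = deriv Pu p.1)
    (hw : ∀ i : Fin M, w (i + 1) = fderiv 𝕜 (F i) (p.2.1 i) (w i)) :
    LinearIndependent 𝕜 ![w M, deriv Ps p.2.2] := by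
  rw [LinearIndependent.pair_iff]
  intro s t hst
  have hker : fderiv 𝕜 (shootingMap hM F Pu Ps) p (s, fun i => s • w i, -t) = 0 := by
    rw [fderiv_shootingMap_apply hM hF hPu hPs]
    refine shootingMap_eq_zero_of_orbit hM (w := fun n => s • w n) ?_ (fun i => ?_) ?_
    · rw [fderiv_eq_smul_deriv, hw0]
    · rw [hw i, map_smul]
    · rw [fderiv_eq_smul_deriv, neg_smul, eq_neg_iff_add_eq_zero, hst]
  obtain ⟨hs, -, ht⟩ : s = 0 ∧ _ ∧ -t = 0 := by
    simpa [Prod.ext_iff] using hinj (hker.trans (map_zero _).symm)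
  exact ⟨hs, neg_eq_zero.mp ht⟩

theorem stmt_18_general (M : ℕ) (hM : 1 ≤ M)
    (F : ℝ × ℝ → ℝ × ℝ) (Pu Ps : ℝ → ℝ × ℝ)
    (hF : ContDiff ℝ 1 F) (hPu : ContDiff ℝ 1 Pu) (hPs : ContDiff ℝ 1 Ps)
    (𝓕 : ℝ × (Fin M → ℝ × ℝ) × ℝ → Fin (M + 1) → ℝ × ℝ)
    (h𝓕 : ∀ (x : ℝ) (v : Fin M → ℝ × ℝ) (y : ℝ),
      𝓕 (x, v, y) = Fin.cons (Pu x - v ⟨0, hM⟩)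
        (fun i : Fin M =>
          if h : (i : ℕ) + 1 < M then F (v i) - v ⟨(i : ℕ) + 1, h⟩
          else F (v i) - Ps y))
    (p : ℝ × (Fin M → ℝ × ℝ) × ℝ)
    (hinv : Function.Bijective (fderiv ℝ 𝓕 p))
    (w : ℕ → ℝ × ℝ)
    (hw0 : w 0 = deriv Pu p.1)
    (hwk : ∀ i : Fin M, w ((i : ℕ) + 1) = fderiv ℝ F (p.2.1 i) (w i)) :
    LinearIndependent ℝ ![w M, deriv Ps p.2.2] := by
  obtain rfl : 𝓕 = shootingMap hM (fun _ => F) Pu Ps := funext fun ⟨x, v, y⟩ => h𝓕 x v y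
  exact linearIndependent_of_injective_fderiv_shootingMap hM
    (fun _ => hF.differentiable one_ne_zero _) (hPu.differentiable one_ne_zero _)
    (hPs.differentiable one_ne_zero _) hinv.injective w hw0 hwk

/-- Transversality from the parallel-shooting map: if the shooting map `𝓕` encoding a
homoclinic orbit segment has a zero at which its Jacobian is invertible, then the tangent
vector to `F^M ∘ P_u` and the tangent vector to `P_s` at the intersection are linearly
independent. -/
theorem stmt_18 (M : ℕ) (hM : 1 ≤ M)
    (F : ℝ × ℝ → ℝ × ℝ) (Pu Ps : ℝ → ℝ × ℝ)
    (hF : ContDiff ℝ 1 F) (hPu : ContDiff ℝ 1 Pu) (hPs : ContDiff ℝ 1 Ps)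
    (𝓕 : ℝ × (Fin M → ℝ × ℝ) × ℝ → Fin (M + 1) → ℝ × ℝ)
    (h𝓕 : ∀ (x : ℝ) (v : Fin M → ℝ × ℝ) (y : ℝ),
      𝓕 (x, v, y) = Fin.cons (Pu x - v ⟨0, hM⟩)
        (fun i : Fin M =>
          if h : (i : ℕ) + 1 < M then F (v i) - v ⟨(i : ℕ) + 1, h⟩
          else F (v i) - Ps y))
    (p : ℝ × (Fin M → ℝ × ℝ) × ℝ)
    (hzero : 𝓕 p = 0)
    (hinv : Function.Bijective (fderiv ℝ 𝓕 p))
    (w : ℕ → ℝ × ℝ)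
    (hw0 : w 0 = deriv Pu p.1)
    (hwk : ∀ i : Fin M, w ((i : ℕ) + 1) = fderiv ℝ F (p.2.1 i) (w i)) :
    LinearIndependent ℝ ![w M, deriv Ps p.2.2] :=
  stmt_18_general M hM F Pu Ps hF hPu hPs 𝓕 h𝓕 p hinv w hw0 hwk
end
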